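/- (Feasible contraction decreases the objective.) Suppose a generalized feasible contraction via functions h_k: U → U' (over a strictly separated partition V = ∪_k V_k, W = ∪_k W_k) transforms a feasible weight p(u|v) on the bipartite graph G[V,U] into p'(u'|v) = Σ_{u∈E_v: h_k(u)=u'} p(u|v) for v ∈ V_k. Then (i) p' is again a feasible weight (it is a conditional distribution supported on E' and satisfies Loss(p') ≤ Loss(p)), and (ii) the objective does not increase: GD_{E'}(p'||p') ≤ GD_E(p||p), i.e., I(U';V) − I(U';W) ≤ I(U;V) − I(U;W). -/

import Mathlib

open Real

noncomputable section

variable {V U W : Type*} [Fintype V] [Fintype U] [Fintype W]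
  [DecidableEq V] [DecidableEq U]

/-- `q(u|v)` is a conditional distribution supported on the edge set `E`. -/
def CondDistOn (E : Finset (V × U)) (q : V → U → ℝ) : Prop :=
  (∀ v u, 0 ≤ q v u) ∧ (∀ v, ∑ u, q v u = 1) ∧ (∀ v u, q v u ≠ 0 → (v, u) ∈ E)

/-- Generalized K-L divergence `GD_E(q‖r)`. -/
def GDE (E : Finset (V × U)) (p : V → ℝ) (pw : V → U → W → ℝ)
    (q : V → U → ℝ) (r : W → U → ℝ) : ℝ :=
  ∑ v, ∑ u, ∑ w, if (v, u) ∈ E then p v * q v u * pw v u w * Real.log (q v u / r w u) else 0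

/-- Expected loss `Loss(q) = Σ p(v) q(u|v) ℓ̃(v,u)`. -/
def LossE (E : Finset (V × U)) (p : V → ℝ) (lt : V → U → ℝ) (q : V → U → ℝ) : ℝ :=
  ∑ v, ∑ u, if (v, u) ∈ E then p v * q v u * lt v u else 0

/-- The joint distribution `p(v,u,w) = p(v) q(u|v) p(w|u,v)`. -/
def jointD (E : Finset (V × U)) (p : V → ℝ) (pw : V → U → W → ℝ) (q : V → U → ℝ)
    (v : V) (u : U) (w : W) : ℝ :=
  if (v, u) ∈ E then p v * q v u * pw v u w else 0

/-- Marginal `p(u)`. -/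
def margU (p : V → ℝ) (q : V → U → ℝ) (u : U) : ℝ := ∑ v, p v * q v u

/-- Marginal `p(u,w)`. -/
def margUW (E : Finset (V × U)) (p : V → ℝ) (pw : V → U → W → ℝ) (q : V → U → ℝ)
    (u : U) (w : W) : ℝ := ∑ v, jointD E p pw q v u w

/-- Marginal `p(w)`. -/
def margW (E : Finset (V × U)) (p : V → ℝ) (pw : V → U → W → ℝ) (q : V → U → ℝ)
    (w : W) : ℝ := ∑ u, margUW E p pw q u w

/-- Mutual information `I(U;V)`. -/
def IUV (p : V → ℝ) (q : V → U → ℝ) : ℝ :=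
  ∑ v, ∑ u, p v * q v u * Real.log (q v u / margU p q u)

/-- Mutual information `I(U;W)`. -/
def IUW (E : Finset (V × U)) (p : V → ℝ) (pw : V → U → W → ℝ) (q : V → U → ℝ) : ℝ :=
  ∑ u, ∑ w, margUW E p pw q u w *
    Real.log (margUW E p pw q u w / (margU p q u * margW E p pw q w))

/-- Objective `I(U;V) - I(U;W)`. -/
def Obj (E : Finset (V × U)) (p : V → ℝ) (pw : V → U → W → ℝ) (q : V → U → ℝ) : ℝ :=
  IUV p q - IUW E p pw q

/-- The induced conditional distribution `r*(q)(u|w)`. -/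
def rstar (E : Finset (V × U)) (p : V → ℝ) (pw : V → U → W → ℝ) (q : V → U → ℝ)
    (w : W) (u : U) : ℝ := margUW E p pw q u w / margW E p pw q w

/-- Gibbs update `q_s^*(r)(u|v)`. -/
def qstar (E : Finset (V × U)) (pw : V → U → W → ℝ) (lt : V → U → ℝ)
    (s : ℝ) (r : W → U → ℝ) (v : V) (u : U) : ℝ :=
  (if (v, u) ∈ E then Real.exp (-s * lt v u) * ∏ w', r w' u ^ pw v u w' else 0) /
  (∑ u', if (v, u') ∈ E then Real.exp (-s * lt v u') * ∏ w', r w' u' ^ pw v u' w' else 0)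

/-- The penalty (Lagrangian) function `F_s(q,r)`. -/
def FPen (E : Finset (V × U)) (p : V → ℝ) (pw : V → U → W → ℝ) (lt : V → U → ℝ)
    (s : ℝ) (q : V → U → ℝ) (r : W → U → ℝ) : ℝ :=
  GDE E p pw q r + s * LossE E p lt q

/-- Generalized K-L divergence between two conditional distributions on `E`. -/
def GDcond (E : Finset (V × U)) (p : V → ℝ) (q1 q2 : V → U → ℝ) : ℝ :=
  ∑ v, ∑ u, if (v, u) ∈ E then p v * q1 v u * Real.log (q1 v u / q2 v u) else 0

/-- Conditional K-L divergence `GD_q(r1‖r2)` weighted by `q(w)`. -/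
def GDr (E : Finset (V × U)) (p : V → ℝ) (pw : V → U → W → ℝ) (q : V → U → ℝ)
    (r1 r2 : W → U → ℝ) : ℝ :=
  ∑ u, ∑ w, margW E p pw q w * r1 w u * Real.log (r1 w u / r2 w u)

/-- The target-loss function `T(L)` (valued in `EReal`, `+∞` if infeasible). -/
def TL (E : Finset (V × U)) (p : V → ℝ) (pw : V → U → W → ℝ) (lt : V → U → ℝ)
    (L : ℝ) : EReal :=
  sInf {x : EReal | ∃ q, CondDistOn E q ∧ LossE E p lt q ≤ L ∧ x = (Obj E p pw q : EReal)}

/-! The objective is the generalized divergence `GD_E(p‖p)`, i.e.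
`Σ p(v) p(u|v) p(w|u,v) log (p(u|v) / p(u|w))` with `p(u|w)` the backward channel `rstar`.
For `v ∈ V_k`, `w ∈ W_k` the channel `p(w|·,v)` is constant on the fibres of `h_k` (on the
support of `p(·|v)`), and both `p'(u'|v)` and `p'(u'|w)` are fibre sums of `p(u|v)` and `p(u|w)`;
so the log-sum inequality, itself a consequence of `log x ≤ x - 1`, applied fibre by fibre gives
the decrease. For `v`, `w` in different blocks strict separation makes every term vanish. -/

open Finset

theorem mul_log_le_mul_log_div_add {a b x : ℝ} (ha : 0 ≤ a) (hb : 0 ≤ b)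
    (hab : a ≠ 0 → b ≠ 0) (hx : 0 < x) :
    a * log x ≤ a * log (a / b) + (x * b - a) := by
  rcases ha.eq_or_lt with rfl | ha
  · simpa using mul_nonneg hx.le hb
  have hb : 0 < b := hb.lt_of_ne' (hab ha.ne')
  have key : log (x * b / a) ≤ x * b / a - 1 := log_le_sub_one_of_pos (by positivity)
  rw [log_div (by positivity) ha.ne', log_mul hx.ne' hb.ne'] at key
  rw [log_div ha.ne' hb.ne']
  have : a * (x * b / a - 1) = x * b - a := by field_simp
  linear_combination mul_le_mul_of_nonneg_left key ha.le + this

theorem sum_mul_log_div_sum_le {ι : Type*} (s : Finset ι) {a b : ι → ℝ}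
    (ha : ∀ i ∈ s, 0 ≤ a i) (hb : ∀ i ∈ s, 0 ≤ b i) (hab : ∀ i ∈ s, a i ≠ 0 → b i ≠ 0) :
    (∑ i ∈ s, a i) * log ((∑ i ∈ s, a i) / ∑ i ∈ s, b i)
      ≤ ∑ i ∈ s, a i * log (a i / b i) := by
  rcases (sum_nonneg ha).eq_or_lt with hA | hA
  · have hzero : ∀ i ∈ s, a i = 0 := (sum_eq_zero_iff_of_nonneg ha).1 hA.symm
    rw [← hA, zero_mul, sum_eq_zero fun i hi => by simp [hzero i hi]]
  obtain ⟨j, hj, haj⟩ := exists_ne_zero_of_sum_ne_zero hA.ne'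
  have hB : 0 < ∑ i ∈ s, b i :=
    (hb j hj).lt_of_ne' (hab j hj haj) |>.trans_le (single_le_sum hb hj)
  have hpointwise := sum_le_sum fun i hi =>
    mul_log_le_mul_log_div_add (ha i hi) (hb i hi) (hab i hi) (div_pos hA hB)
  rw [← sum_mul, sum_add_distrib, sum_sub_distrib, ← mul_sum, div_mul_cancel₀ _ hB.ne']
    at hpointwise
  simpa using hpointwise

theorem sum_fiberwise_mul_log_div_le {ι κ : Type*} [Fintype ι] [Fintype κ] [DecidableEq κ]
    (f : ι → κ) {c : κ → ℝ} {a b : ι → ℝ} (hc : ∀ k, 0 ≤ c k) (ha : ∀ i, 0 ≤ a i)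
    (hb : ∀ i, 0 ≤ b i) (hab : ∀ i, c (f i) ≠ 0 → a i ≠ 0 → b i ≠ 0) :
    ∑ k, c k * ((∑ i with f i = k, a i) * log ((∑ i with f i = k, a i) / ∑ i with f i = k, b i))
      ≤ ∑ i, c (f i) * (a i * log (a i / b i)) := by
  rw [← sum_fiberwise univ f]
  refine sum_le_sum fun k _ => ?_
  have hconst : ∑ i with f i = k, c (f i) * (a i * log (a i / b i))
      = c k * ∑ i with f i = k, a i * log (a i / b i) := by
    rw [mul_sum]
    exact sum_congr rfl fun i hi => by rw [(mem_filter.1 hi).2]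
  rw [hconst]
  rcases (hc k).eq_or_lt with hk | hk
  · simp [← hk]
  refine mul_le_mul_of_nonneg_left
    (sum_mul_log_div_sum_le _ (fun i _ => ha i) (fun i _ => hb i) fun i hi => ?_) hk.le
  exact hab i (by rw [(mem_filter.1 hi).2]; exact hk.ne')

section JointDistribution

variable {E : Finset (V × U)} {p : V → ℝ} {pw : V → U → W → ℝ} {q : V → U → ℝ}

omit [Fintype V] [Fintype U] in
theorem ite_mem_eq_of_support (hqE : ∀ v u, q v u ≠ 0 → (v, u) ∈ E) {v : V} {u : U} {x : ℝ}
    (hx : q v u = 0 → x = 0) : (if (v, u) ∈ E then x else 0) = x := by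
  split_ifs with hvu
  · rfl
  · exact (hx (not_imp_comm.1 (hqE v u) hvu)).symm

theorem LossE_eq_sum (hqE : ∀ v u, q v u ≠ 0 → (v, u) ∈ E) (lt : V → U → ℝ) :
    LossE E p lt q = ∑ v, ∑ u, p v * q v u * lt v u :=
  sum_congr rfl fun v _ => sum_congr rfl fun u _ =>
    ite_mem_eq_of_support hqE fun h0 => by rw [h0]; ring

omit [Fintype V] [Fintype U] [Fintype W] in
theorem jointD_eq_mul (hqE : ∀ v u, q v u ≠ 0 → (v, u) ∈ E) (v : V) (u : U) (w : W) :
    jointD E p pw q v u w = p v * q v u * pw v u w :=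
  ite_mem_eq_of_support hqE fun h0 => by rw [h0]; ring

omit [Fintype V] [Fintype U] [Fintype W] in
theorem jointD_nonneg (hp : ∀ v, 0 ≤ p v) (hpw0 : ∀ v u w, 0 ≤ pw v u w)
    (hq0 : ∀ v u, 0 ≤ q v u) (v : V) (u : U) (w : W) : 0 ≤ jointD E p pw q v u w := by
  unfold jointD
  split_ifs
  · exact mul_nonneg (mul_nonneg (hp v) (hq0 v u)) (hpw0 v u w)
  · rfl

theorem GDE_eq_sum_jointD_mul (r : W → U → ℝ) :
    GDE E p pw q r = ∑ v, ∑ u, ∑ w, jointD E p pw q v u w * log (q v u / r w u) := by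
  simp only [GDE, jointD, ite_mul, zero_mul]

omit [Fintype V] [Fintype U] in
theorem sum_jointD (hqE : ∀ v u, q v u ≠ 0 → (v, u) ∈ E)
    (hpw1 : ∀ v u, (v, u) ∈ E → ∑ w, pw v u w = 1) (v : V) (u : U) :
    ∑ w, jointD E p pw q v u w = p v * q v u := by
  by_cases hvu : (v, u) ∈ E
  · simp only [jointD, if_pos hvu, ← mul_sum, hpw1 v u hvu, mul_one]
  · simp [jointD, hvu, not_not.1 ((hqE v u).mt hvu)]

omit [Fintype U] [Fintype W] in
theorem margUW_pos_of_jointD_pos (hp : ∀ v, 0 ≤ p v) (hpw0 : ∀ v u w, 0 ≤ pw v u w)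
    (hq0 : ∀ v u, 0 ≤ q v u) {v : V} {u : U} {w : W} (hJ : 0 < jointD E p pw q v u w) :
    0 < margUW E p pw q u w :=
  hJ.trans_le (single_le_sum (fun v _ => jointD_nonneg hp hpw0 hq0 v u w) (mem_univ v))

omit [Fintype W] in
theorem margW_pos_of_jointD_pos (hp : ∀ v, 0 ≤ p v) (hpw0 : ∀ v u w, 0 ≤ pw v u w)
    (hq0 : ∀ v u, 0 ≤ q v u) {v : V} {u : U} {w : W} (hJ : 0 < jointD E p pw q v u w) :
    0 < margW E p pw q w :=
  (margUW_pos_of_jointD_pos hp hpw0 hq0 hJ).trans_le <| single_le_sum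
    (fun u _ => sum_nonneg fun v _ => jointD_nonneg hp hpw0 hq0 v u w) (mem_univ u)

omit [Fintype W] in
theorem rstar_nonneg (hp : ∀ v, 0 ≤ p v) (hpw0 : ∀ v u w, 0 ≤ pw v u w)
    (hq0 : ∀ v u, 0 ≤ q v u) (w : W) (u : U) : 0 ≤ rstar E p pw q w u :=
  div_nonneg (sum_nonneg fun v _ => jointD_nonneg hp hpw0 hq0 v u w)
    (sum_nonneg fun u _ => sum_nonneg fun v _ => jointD_nonneg hp hpw0 hq0 v u w)

end JointDistribution

theorem Obj_eq_GDE_rstar {E : Finset (V × U)} {p : V → ℝ} {pw : V → U → W → ℝ}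
    {q : V → U → ℝ} (hp : ∀ v, 0 ≤ p v) (hpw0 : ∀ v u w, 0 ≤ pw v u w)
    (hpw1 : ∀ v u, (v, u) ∈ E → ∑ w, pw v u w = 1) (hq : CondDistOn E q) :
    Obj E p pw q = GDE E p pw q (rstar E p pw q) := by
  obtain ⟨hq0, -, hqE⟩ := hq
  set J := jointD E p pw q
  have hJ0 : ∀ v u w, 0 ≤ J v u w := jointD_nonneg hp hpw0 hq0
  have hIUV : IUV p q = ∑ v, ∑ u, ∑ w, J v u w * log (q v u / margU p q u) := by
    simp only [IUV, ← sum_mul, J, sum_jointD hqE hpw1]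
  have hIUW : IUW E p pw q = ∑ v, ∑ u, ∑ w, J v u w *
      log (margUW E p pw q u w / (margU p q u * margW E p pw q w)) := by
    rw [sum_comm]
    refine sum_congr rfl fun u _ => ?_
    rw [sum_comm]
    exact sum_congr rfl fun w _ => sum_mul _ _ _
  rw [Obj, hIUV, hIUW, GDE_eq_sum_jointD_mul]
  simp only [← sum_sub_distrib, ← mul_sub]
  refine sum_congr rfl fun v _ => sum_congr rfl fun u _ => sum_congr rfl fun w _ => ?_
  rcases (hJ0 v u w).eq_or_lt with hJ | hJ
  · simp [J, ← hJ]
  have hpq : 0 < p v * q v u := by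
    rw [show J v u w = p v * q v u * pw v u w from jointD_eq_mul hqE v u w] at hJ
    exact pos_of_mul_pos_left hJ (hpw0 v u w)
  have hqpos : 0 < q v u := pos_of_mul_pos_right hpq (hp v)
  have hU : 0 < margU p q u :=
    hpq.trans_le (single_le_sum (fun v _ => mul_nonneg (hp v) (hq0 v u)) (mem_univ v))
  have hUW := margUW_pos_of_jointD_pos hp hpw0 hq0 hJ
  have hW := margW_pos_of_jointD_pos hp hpw0 hq0 hJ
  rw [← log_div (by positivity) (by positivity), rstar]
  congr 2
  field_simp

def contractWeight (E : Finset (V × U)) (g : V → U → U) (q : V → U → ℝ) (v : V) (u' : U) : ℝ :=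
  ∑ u, if (v, u) ∈ E ∧ g v u = u' then q v u else 0

section Contraction

variable {E E' : Finset (V × U)} {g : V → U → U} {q : V → U → ℝ}

omit [Fintype V] in
theorem contractWeight_eq_sum_filter (hqE : ∀ v u, q v u ≠ 0 → (v, u) ∈ E) (v : V) (u' : U) :
    contractWeight E g q v u' = ∑ u with g v u = u', q v u := by
  rw [sum_filter]
  refine sum_congr rfl fun u _ => ?_
  by_cases hvu : (v, u) ∈ E
  · simp [hvu]
  · simp [hvu, not_not.1 ((hqE v u).mt hvu)]

omit [Fintype V] in
theorem sum_contractWeight_mul (hqE : ∀ v u, q v u ≠ 0 → (v, u) ∈ E) (φ : U → ℝ) (v : V) :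
    ∑ u', contractWeight E g q v u' * φ u' = ∑ u, q v u * φ (g v u) := by
  simp only [contractWeight_eq_sum_filter hqE, sum_mul]
  rw [← sum_fiberwise univ (g v) fun u => q v u * φ (g v u)]
  exact sum_congr rfl fun u' _ => sum_congr rfl fun u hu => by rw [(mem_filter.1 hu).2]

omit [Fintype V] in
theorem contractWeight_ne_zero_mem (hgE : ∀ v u, (v, u) ∈ E → (v, g v u) ∈ E') {v : V} {u' : U}
    (hne : contractWeight E g q v u' ≠ 0) : (v, u') ∈ E' := by
  obtain ⟨u, -, hu⟩ := exists_ne_zero_of_sum_ne_zero hne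
  obtain ⟨⟨hvu, rfl⟩, -⟩ := ite_ne_right_iff.1 hu
  exact hgE v u hvu

omit [Fintype V] in
theorem CondDistOn.contractWeight (hq : CondDistOn E q)
    (hgE : ∀ v u, (v, u) ∈ E → (v, g v u) ∈ E') : CondDistOn E' (contractWeight E g q) := by
  obtain ⟨hq0, hq1, hqE⟩ := hq
  refine ⟨fun v u' => sum_nonneg fun u _ => ?_, fun v => ?_,
    fun v u' => contractWeight_ne_zero_mem hgE⟩
  · split_ifs
    exacts [hq0 v u, le_rfl]
  · simpa [hq1 v] using sum_contractWeight_mul hqE (fun _ => 1) v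

theorem LossE_contractWeight_le {p : V → ℝ} {lt : V → U → ℝ} (hp : ∀ v, 0 ≤ p v)
    (hq : CondDistOn E q) (hgE : ∀ v u, (v, u) ∈ E → (v, g v u) ∈ E')
    (hgl : ∀ v u, (v, u) ∈ E → lt v (g v u) ≤ lt v u) :
    LossE E' p lt (contractWeight E g q) ≤ LossE E p lt q := by
  rw [LossE_eq_sum (hq.contractWeight hgE).2.2, LossE_eq_sum hq.2.2]
  refine sum_le_sum fun v _ => ?_
  simp only [mul_assoc, ← mul_sum, sum_contractWeight_mul hq.2.2 (lt v)]
  refine mul_le_mul_of_nonneg_left (sum_le_sum fun u _ => ?_) (hp v)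
  by_cases hqu : q v u = 0
  · simp [hqu]
  · exact mul_le_mul_of_nonneg_left (hgl v u (hq.2.2 v u hqu)) (hq.1 v u)

end Contraction

section Separation

variable {K : Type*} {E E' : Finset (V × U)} {p : V → ℝ} {pw : V → U → W → ℝ}
  {kV : V → K} {kW : W → K} {h : K → U → U} {q : V → U → ℝ}

omit [Fintype V] [Fintype U] [Fintype W] [DecidableEq V] [DecidableEq U] in
theorem mul_pw_eq_zero_of_ne (hpw0 : ∀ v u w, 0 ≤ pw v u w)
    (hsep : ∀ v w, (∃ u, (v, u) ∈ E ∧ 0 < pw v u w) → kV v = kW w)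
    (hqE : ∀ v u, q v u ≠ 0 → (v, u) ∈ E) {v : V} {w : W} (hk : kV v ≠ kW w) (u : U) :
    q v u * pw v u w = 0 := by
  by_cases hqu : q v u = 0
  · rw [hqu, zero_mul]
  · have : ¬ 0 < pw v u w := fun hpos => hk (hsep v w ⟨u, hqE v u hqu, hpos⟩)
    rw [le_antisymm (not_lt.1 this) (hpw0 v u w), mul_zero]

omit [Fintype V] [Fintype U] [Fintype W] [DecidableEq V] [DecidableEq U] in
theorem mul_pw_contract_eq
    (hhp : ∀ v u w, (v, u) ∈ E → kW w = kV v → pw v (h (kV v) u) w = pw v u w)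
    (hqE : ∀ v u, q v u ≠ 0 → (v, u) ∈ E) {v : V} {w : W} (hk : kV v = kW w) (u : U) :
    q v u * pw v (h (kW w) u) w = q v u * pw v u w := by
  by_cases hqu : q v u = 0
  · simp [hqu]
  · rw [← hk, hhp v u w (hqE v u hqu) hk.symm]

omit [Fintype V] [Fintype W] in
theorem jointD_contractWeight (hsub : E' ⊆ E) (hhE : ∀ k v u, (v, u) ∈ E → (v, h k u) ∈ E')
    (hpw0 : ∀ v u w, 0 ≤ pw v u w) (hsep : ∀ v w, (∃ u, (v, u) ∈ E ∧ 0 < pw v u w) → kV v = kW w)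
    (hhp : ∀ v u w, (v, u) ∈ E → kW w = kV v → pw v (h (kV v) u) w = pw v u w)
    (hqE : ∀ v u, q v u ≠ 0 → (v, u) ∈ E) (v : V) (u' : U) (w : W) :
    jointD E' p pw (contractWeight E (fun v => h (kV v)) q) v u' w
      = ∑ u with h (kW w) u = u', jointD E p pw q v u w := by
  have hq'E : ∀ v u', contractWeight E (fun v => h (kV v)) q v u' ≠ 0 → (v, u') ∈ E' :=
    fun _ _ => contractWeight_ne_zero_mem fun v u => hhE (kV v) v u
  simp only [jointD_eq_mul hq'E, jointD_eq_mul hqE, mul_assoc]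
  by_cases hk : kV v = kW w
  · rw [contractWeight_eq_sum_filter hqE, hk, sum_mul, mul_sum]
    refine sum_congr rfl fun u hu => ?_
    rw [← (mem_filter.1 hu).2, mul_pw_contract_eq hhp hqE hk]
  · rw [mul_pw_eq_zero_of_ne hpw0 (E := E) hsep (fun v u hne => hsub (hq'E v u hne)) hk,
      mul_zero, sum_eq_zero fun u _ => by rw [mul_pw_eq_zero_of_ne hpw0 hsep hqE hk, mul_zero]]

omit [Fintype W] in
theorem margUW_contractWeight (hsub : E' ⊆ E) (hhE : ∀ k v u, (v, u) ∈ E → (v, h k u) ∈ E')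
    (hpw0 : ∀ v u w, 0 ≤ pw v u w) (hsep : ∀ v w, (∃ u, (v, u) ∈ E ∧ 0 < pw v u w) → kV v = kW w)
    (hhp : ∀ v u w, (v, u) ∈ E → kW w = kV v → pw v (h (kV v) u) w = pw v u w)
    (hqE : ∀ v u, q v u ≠ 0 → (v, u) ∈ E) (u' : U) (w : W) :
    margUW E' p pw (contractWeight E (fun v => h (kV v)) q) u' w
      = ∑ u with h (kW w) u = u', margUW E p pw q u w := by
  simp only [margUW, jointD_contractWeight hsub hhE hpw0 hsep hhp hqE]
  exact sum_comm

omit [Fintype W] in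
theorem rstar_contractWeight (hsub : E' ⊆ E) (hhE : ∀ k v u, (v, u) ∈ E → (v, h k u) ∈ E')
    (hpw0 : ∀ v u w, 0 ≤ pw v u w) (hsep : ∀ v w, (∃ u, (v, u) ∈ E ∧ 0 < pw v u w) → kV v = kW w)
    (hhp : ∀ v u w, (v, u) ∈ E → kW w = kV v → pw v (h (kV v) u) w = pw v u w)
    (hqE : ∀ v u, q v u ≠ 0 → (v, u) ∈ E) (w : W) (u' : U) :
    rstar E' p pw (contractWeight E (fun v => h (kV v)) q) w u'
      = ∑ u with h (kW w) u = u', rstar E p pw q w u := by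
  have hW : margW E' p pw (contractWeight E (fun v => h (kV v)) q) w = margW E p pw q w := by
    simp only [margW, margUW_contractWeight hsub hhE hpw0 hsep hhp hqE]
    exact sum_fiberwise _ _ _
  rw [rstar, hW, margUW_contractWeight hsub hhE hpw0 hsep hhp hqE, sum_div]
  rfl

theorem GDE_rstar_contractWeight_le (hp : ∀ v, 0 ≤ p v) (hsub : E' ⊆ E)
    (hhE : ∀ k v u, (v, u) ∈ E → (v, h k u) ∈ E') (hpw0 : ∀ v u w, 0 ≤ pw v u w)
    (hsep : ∀ v w, (∃ u, (v, u) ∈ E ∧ 0 < pw v u w) → kV v = kW w)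
    (hhp : ∀ v u w, (v, u) ∈ E → kW w = kV v → pw v (h (kV v) u) w = pw v u w)
    (hq0 : ∀ v u, 0 ≤ q v u) (hqE : ∀ v u, q v u ≠ 0 → (v, u) ∈ E) :
    GDE E' p pw (contractWeight E (fun v => h (kV v)) q)
        (rstar E' p pw (contractWeight E (fun v => h (kV v)) q))
      ≤ GDE E p pw q (rstar E p pw q) := by
  have hq'E : ∀ v u', contractWeight E (fun v => h (kV v)) q v u' ≠ 0 → (v, u') ∈ E' :=
    fun _ _ => contractWeight_ne_zero_mem fun v u => hhE (kV v) v u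
  rw [GDE_eq_sum_jointD_mul, GDE_eq_sum_jointD_mul]
  refine sum_le_sum fun v _ => ?_
  rw [sum_comm, sum_comm (s := univ (α := U))]
  refine sum_le_sum fun w _ => ?_
  simp only [jointD_eq_mul hq'E, jointD_eq_mul hqE, rstar_contractWeight hsub hhE hpw0 hsep hhp hqE]
  by_cases hk : kV v = kW w
  · have hLS := sum_fiberwise_mul_log_div_le (h (kW w)) (c := fun u' => p v * pw v u' w)
      (a := q v) (b := rstar E p pw q w) (fun u' => mul_nonneg (hp v) (hpw0 v u' w)) (hq0 v)
      (rstar_nonneg hp hpw0 hq0 w)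
      (fun u hc hqu => by
        have hJ : 0 < jointD E p pw q v u w := by
          refine (jointD_nonneg hp hpw0 hq0 v u w).lt_of_ne' ?_
          rw [jointD_eq_mul hqE, mul_assoc, ← mul_pw_contract_eq hhp hqE hk]
          convert mul_ne_zero hc hqu using 1
          ring
        exact (div_pos (margUW_pos_of_jointD_pos hp hpw0 hq0 hJ)
          (margW_pos_of_jointD_pos hp hpw0 hq0 hJ)).ne')
    simp only [contractWeight_eq_sum_filter hqE, hk]
    calc _ = _ := sum_congr rfl fun u' _ => by ring
      _ ≤ _ := hLS
      _ = _ := sum_congr rfl fun u _ => by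
        linear_combination p v * log (q v u / rstar E p pw q w u) * mul_pw_contract_eq hhp hqE hk u
  · have hvanish {q : V → U → ℝ} (hqE : ∀ v u, q v u ≠ 0 → (v, u) ∈ E) (f : U → ℝ) :
        ∑ u, p v * q v u * pw v u w * f u = 0 :=
      sum_eq_zero fun u _ => by
        rw [mul_assoc (p v), mul_pw_eq_zero_of_ne hpw0 hsep hqE hk, mul_zero, zero_mul]
    rw [hvanish fun v u hne => hsub (hq'E v u hne), hvanish hqE]

end Separation

theorem feasible_contraction_general
    {K : Type*}
    (E E' : Finset (V × U)) (hsub : E' ⊆ E)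
    (p : V → ℝ) (hp : ∀ v, 0 < p v)
    (pw : V → U → W → ℝ) (hpw0 : ∀ v u w, 0 ≤ pw v u w)
    (hpw1 : ∀ v u, (v, u) ∈ E → ∑ w, pw v u w = 1)
    (lt : V → U → ℝ)
    -- the partitions, encoded by index maps
    (kV : V → K) (kW : W → K)
    -- strict separation condition
    (hsep : ∀ v w, (∃ u, (v, u) ∈ E ∧ 0 < pw v u w) → kV v = kW w)
    -- the contraction maps
    (h : K → U → U)
    (hhE : ∀ k v u, (v, u) ∈ E → (v, h k u) ∈ E')
    (hhl : ∀ v u, (v, u) ∈ E → lt v (h (kV v) u) ≤ lt v u)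
    (hhp : ∀ v u w, (v, u) ∈ E → kW w = kV v → pw v (h (kV v) u) w = pw v u w)
    -- a feasible weight and its contraction
    (q : V → U → ℝ) (hq : CondDistOn E q) (L : ℝ) (hqL : LossE E p lt q ≤ L)
    (q' : V → U → ℝ)
    (hq' : ∀ v u', q' v u'
      = ∑ u, if (v, u) ∈ E ∧ h (kV v) u = u' then q v u else 0) :
    CondDistOn E' q'
      ∧ LossE E' p lt q' ≤ LossE E p lt q
      ∧ LossE E' p lt q' ≤ L
      ∧ Obj E' p pw q' ≤ Obj E p pw q := by
  obtain rfl : q' = contractWeight E (fun v => h (kV v)) q := funext₂ hq'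
  have hp0 : ∀ v, 0 ≤ p v := fun v => (hp v).le
  have hq'cd := hq.contractWeight fun v u => hhE (kV v) v u
  have hloss := LossE_contractWeight_le hp0 hq (fun v u => hhE (kV v) v u) hhl
  refine ⟨hq'cd, hloss, hloss.trans hqL, ?_⟩
  rw [Obj_eq_GDE_rstar hp0 hpw0 hpw1 hq,
    Obj_eq_GDE_rstar hp0 hpw0 (fun v u hvu => hpw1 v u (hsub hvu)) hq'cd]
  exact GDE_rstar_contractWeight_le hp0 hsub hhE hpw0 hsep hhp hq.1 hq.2.2

/-- a generalized feasible contraction produces a feasible weight and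
does not increase the loss nor the objective `I(U;V) − I(U;W)`. -/
theorem feasible_contraction
    {K : Type*} [Fintype K]
    (E E' : Finset (V × U)) (hE : ∀ v : V, ∃ u, (v, u) ∈ E) (hsub : E' ⊆ E)
    (p : V → ℝ) (hp : ∀ v, 0 < p v) (hp1 : ∑ v, p v = 1)
    (pw : V → U → W → ℝ) (hpw0 : ∀ v u w, 0 ≤ pw v u w)
    (hpw1 : ∀ v u, (v, u) ∈ E → ∑ w, pw v u w = 1)
    (lt : V → U → ℝ) (hlt : ∀ v u, 0 ≤ lt v u)
    -- the partitions, encoded by index maps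
    (kV : V → K) (kW : W → K)
    -- strict separation condition
    (hsep : ∀ v w, (∃ u, (v, u) ∈ E ∧ 0 < pw v u w) → kV v = kW w)
    -- the contraction maps
    (h : K → U → U)
    (hhE : ∀ k v u, (v, u) ∈ E → (v, h k u) ∈ E')
    (hhl : ∀ v u, (v, u) ∈ E → lt v (h (kV v) u) ≤ lt v u)
    (hhp : ∀ v u w, (v, u) ∈ E → kW w = kV v → pw v (h (kV v) u) w = pw v u w)
    -- a feasible weight and its contraction
    (q : V → U → ℝ) (hq : CondDistOn E q) (L : ℝ) (hqL : LossE E p lt q ≤ L)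
    (q' : V → U → ℝ)
    (hq' : ∀ v u', q' v u'
      = ∑ u, if (v, u) ∈ E ∧ h (kV v) u = u' then q v u else 0) :
    CondDistOn E' q'
      ∧ LossE E' p lt q' ≤ LossE E p lt q
      ∧ LossE E' p lt q' ≤ L
      ∧ Obj E' p pw q' ≤ Obj E p pw q :=
  feasible_contraction_general E E' hsub p hp pw hpw0 hpw1 lt kV kW hsep h hhE hhl hhp q hq L hqL q'
    hq'
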